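/- arXiv:1012.1231 — 7 statements merged into one kernel-verified Lean document; each statement's English description precedes it below -/
import Mathlib

section
/- A cubic graph G is 3-edge-colorable if and only if the directed graph D obtained from G by replacing each edge {u,v} with the two oppositely directed arcs (u,v) and (v,u) contains an anti-directed 2-factor. -/
/-!
A proper 3-edge-colouring of a cubic graph amounts to two disjoint perfect matchings `f`, `g`,
viewed as fixed-point-free involutions; the third colour class is the rest. Their union is a
2-factor, and it is bipartite: `f` maps every cycle of the rotation `f * g` onto a different one,
so choosing one cycle out of each such pair gives the sources. Conversely, an anti-directed
2-factor is a 2-regular bipartite subgraph, so it has a perfect matching by Hall's theorem; that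
matching, the rest of the 2-factor and the remaining edges are the three colour classes.
-/

/-- Out-degree of `v` in the digraph given by arc relation `A`. -/
noncomputable def outDeg {V : Type*} (A : V → V → Prop) (v : V) : ℕ := {u | A v u}.ncard

/-- In-degree of `v` in the digraph given by arc relation `A`. -/
noncomputable def inDeg {V : Type*} (A : V → V → Prop) (v : V) : ℕ := {u | A u v}.ncard

/-- `H` is the underlying graph of a spanning collection of vertex-disjoint anti-directed
cycles of the digraph `A`, with `S` the set of "source" vertices.  Since arc directions
alternate along an anti-directed cycle, its vertices split into sources (both incident
arcs point out) and sinks (both incident arcs point in); thus an anti-directed 2-factor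
is the same as a 2-regular spanning simple graph each of whose edges joins a source to a
sink along an arc of `A`. -/
def AntiDirected2Factor {V : Type*} (A : V → V → Prop) (S : Set V) (H : SimpleGraph V) :
    Prop :=
  (∀ v, (H.neighborSet v).ncard = 2) ∧
    ∀ u v, H.Adj u v → (u ∈ S ∧ v ∉ S ∧ A u v) ∨ (v ∈ S ∧ u ∉ S ∧ A v u)

/-- The digraph with arc relation `A` has an anti-directed 2-factor. -/
def HasAntiDirected2Factor {V : Type*} (A : V → V → Prop) : Prop :=
  ∃ (S : Set V) (H : SimpleGraph V), AntiDirected2Factor A S H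

open Function

namespace Equiv.Perm

variable {V : Type*} {f g : Perm V}

theorem mul_self_eq_one_of_involutive (hf : Involutive f) : f * f = 1 := by
  ext; simp [hf _]

theorem inv_eq_self_of_involutive (hf : Involutive f) : f⁻¹ = f :=
  inv_eq_of_mul_eq_one_right (mul_self_eq_one_of_involutive hf)

theorem conj_mul_eq_inv_of_involutive (hf : Involutive f) (hg : Involutive g) :
    f * (f * g) * f⁻¹ = (f * g)⁻¹ := by
  rw [← mul_assoc, mul_self_eq_one_of_involutive hf, one_mul, mul_inv_rev,
    inv_eq_self_of_involutive hf, inv_eq_self_of_involutive hg]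

theorem SameCycle.apply_mul_of_involutive (hf : Involutive f) (hg : Involutive g) {a b : V}
    (h : (f * g).SameCycle a b) : (f * g).SameCycle (f a) (f b) := by
  have := h.conj (g := f)
  rwa [conj_mul_eq_inv_of_involutive hf hg, sameCycle_inv] at this

/-- The reflections `f * (f * g) ^ n` are conjugate to `f` or to `g`, so none has a fixed point. -/
theorem not_sameCycle_mul_apply_left (hf : Involutive f) (hg : Involutive g)
    (hf' : ∀ x, f x ≠ x) (hg' : ∀ x, g x ≠ x) (v : V) : ¬ (f * g).SameCycle v (f v) := by
  set π := f * g
  have hconj (t : ℤ) : f * π ^ t = π ^ (-t) * f := by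
    rw [zpow_neg, ← inv_zpow, ← conj_mul_eq_inv_of_involutive hf hg, conj_zpow,
      inv_mul_cancel_right]
  have hfπ : f * π = g := by
    rw [← mul_assoc, mul_self_eq_one_of_involutive hf, one_mul]
  rintro ⟨n, hn⟩
  obtain ⟨t, rfl | rfl⟩ := Int.even_or_odd' n
  · apply hf' ((π ^ t) v)
    calc f ((π ^ t) v) = (π ^ (-t) * π ^ (2 * t)) v := by
          rw [← mul_apply, hconj, mul_apply, mul_apply, hn]
      _ = (π ^ t) v := by rw [← zpow_add]; congr 2; ring
  · apply hg' ((π ^ t) v)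
    calc g ((π ^ t) v) = (π ^ (-(t + 1)) * π ^ (2 * t + 1)) v := by
          rw [← hfπ, mul_apply, ← mul_apply π, ← zpow_one_add, ← mul_apply, hconj,
            mul_apply, mul_apply, hn, add_comm]
      _ = (π ^ t) v := by rw [← zpow_add]; congr 2; ring

end Equiv.Perm

theorem Setoid.exists_saturated_set_swapped {V : Type*} {r : Setoid V} {f : V → V}
    (hf : Involutive f) (hr : ∀ ⦃a b⦄, r a b → r (f a) (f b)) (hfix : ∀ v, ¬ r v (f v)) :
    ∃ S : Set V, (∀ ⦃a b⦄, r a b → (a ∈ S ↔ b ∈ S)) ∧ ∀ v, f v ∈ S ↔ v ∉ S := by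
  -- `R` merges each `r`-class with its `f`-image; `S` keeps the half containing the
  -- representative chosen by `Quotient.out`.
  let R : Setoid V :=
    { r := fun a b => r a b ∨ r a (f b)
      iseqv :=
        { refl := fun a => Or.inl (r.refl a)
          symm := by
            rintro a b (h | h)
            · exact Or.inl (r.symm h)
            · exact Or.inr (by simpa only [hf b] using r.symm (hr h))
          trans := by
            rintro a b c (h | h) (h' | h')
            · exact Or.inl (r.trans h h')
            · exact Or.inr (r.trans h h')
            · exact Or.inr (r.trans h (hr h'))
            · exact Or.inl (by simpa only [hf c] using r.trans h (hr h')) } }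
  let o : V → V := fun v => (Quotient.mk R v).out
  have ho_rel (v : V) : r (o v) v ∨ r (o v) (f v) := Quotient.mk_out (s := R) v
  have ho_eq {a b : V} (h : R a b) : o a = o b := by
    simp only [o, Quotient.sound h]
  refine ⟨{v | r (o v) v}, fun a b h => ?_, fun v => ?_⟩
  · simp only [Set.mem_ofPred_eq, ho_eq (Or.inl h : R a b)]
    exact ⟨fun h' => r.trans h' h, fun h' => r.trans h' (r.symm h)⟩
  · have hov : o (f v) = o v := ho_eq (Or.inr (r.refl _) : R (f v) v)
    simp only [Set.mem_ofPred_eq, hov]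
    rcases ho_rel v with h | h
    · exact ⟨fun h' => (hfix v (r.trans (r.symm h) h')).elim, fun h' => (h' h).elim⟩
    · exact ⟨fun h' hv => hfix v (r.trans (r.symm hv) h'), fun _ => h⟩

theorem exists_set_swapped_by_involutions {V : Type*} {f g : V → V} (hf : Involutive f)
    (hg : Involutive g) (hf' : ∀ v, f v ≠ v) (hg' : ∀ v, g v ≠ v) :
    ∃ S : Set V, ∀ v, (f v ∈ S ↔ v ∉ S) ∧ (g v ∈ S ↔ v ∉ S) := by
  set F := hf.toPerm f
  set G := hg.toPerm g
  obtain ⟨S, hsat, hswap⟩ :=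
    Setoid.exists_saturated_set_swapped (r := Equiv.Perm.SameCycle.setoid (F * G)) hf
      (fun _ _ h => h.apply_mul_of_involutive hf hg)
      (Equiv.Perm.not_sameCycle_mul_apply_left hf hg hf' hg')
  refine ⟨S, fun v => ⟨hswap v, ?_⟩⟩
  have hgf : (F * G).SameCycle (g v) (f v) := ⟨1, by simp [F, G, hg v]⟩
  rw [hsat hgf, hswap]

namespace SimpleGraph

variable {V : Type*}

def IsProperEdgeColoring {α : Type*} (G : SimpleGraph V) (c : Sym2 V → α) : Prop :=
  ∀ u v w, G.Adj u v → G.Adj u w → v ≠ w → c s(u, v) ≠ c s(u, w)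

theorem hasAntiDirected2Factor_of_involutions (G : SimpleGraph V) {f g : V → V}
    (hf : Involutive f) (hg : Involutive g) (hfG : ∀ v, G.Adj v (f v))
    (hgG : ∀ v, G.Adj v (g v)) (hfg : ∀ v, f v ≠ g v) :
    HasAntiDirected2Factor (fun u v => G.Adj u v) := by
  obtain ⟨S, hS⟩ := exists_set_swapped_by_involutions hf hg (fun v => (hfG v).ne')
    (fun v => (hgG v).ne')
  let H : SimpleGraph V :=
    { Adj := fun u v => v = f u ∨ v = g u
      symm := ⟨by
        rintro u v (rfl | rfl)
        exacts [Or.inl (hf u).symm, Or.inr (hg u).symm]⟩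
      loopless := ⟨by
        rintro v (h | h)
        exacts [(hfG v).ne' h.symm, (hgG v).ne' h.symm]⟩ }
  have hH (v : V) : H.neighborSet v = {f v, g v} := rfl
  refine ⟨S, H, fun v => by rw [hH, Set.ncard_pair (hfg v)], ?_⟩
  have hcross {h : V → V} (hGh : ∀ v, G.Adj v (h v)) (hSh : ∀ v, h v ∈ S ↔ v ∉ S) (u : V) :
      (u ∈ S ∧ h u ∉ S ∧ G.Adj u (h u)) ∨ (h u ∈ S ∧ u ∉ S ∧ G.Adj (h u) u) := by
    by_cases hu : u ∈ S
    · exact Or.inl ⟨hu, by simpa [hSh] using hu, hGh u⟩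
    · exact Or.inr ⟨(hSh u).2 hu, hu, (hGh u).symm⟩
  rintro u v (rfl | rfl)
  exacts [hcross hfG (fun v => (hS v).1) u, hcross hgG (fun v => (hS v).2) u]

section ProperEdgeColoring

variable {G : SimpleGraph V} {n : ℕ} {c : Sym2 V → Fin n}

theorem IsProperEdgeColoring.exists_adj_eq (hG : ∀ v, (G.neighborSet v).ncard = n)
    (hc : G.IsProperEdgeColoring c) (v : V) (i : Fin n) :
    ∃ u, G.Adj v u ∧ c s(v, u) = i := by
  have hinj : Injective fun u : G.neighborSet v => c s(v, u) :=
    fun a b hab => Subtype.ext (not_imp_comm.mp (hc v a b a.2 b.2) (not_not_intro hab))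
  obtain ⟨u, hu⟩ := (hinj.bijective_of_nat_card_le (by simp [hG])).2 i
  exact ⟨u, u.2, hu⟩

theorem IsProperEdgeColoring.exists_involutive (hG : ∀ v, (G.neighborSet v).ncard = n)
    (hc : G.IsProperEdgeColoring c) (i : Fin n) :
    ∃ f : V → V, Involutive f ∧ ∀ v, G.Adj v (f v) ∧ c s(v, f v) = i := by
  choose f hf using fun v => hc.exists_adj_eq hG v i
  refine ⟨f, fun v => ?_, hf⟩
  by_contra hne
  refine hc (f v) _ _ (hf (f v)).1 (hf v).1.symm hne ?_
  rw [(hf (f v)).2, Sym2.eq_swap, (hf v).2]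

end ProperEdgeColoring

theorem hasAntiDirected2Factor_of_isProperEdgeColoring {G : SimpleGraph V}
    (hG : ∀ v, (G.neighborSet v).ncard = 3) {c : Sym2 V → Fin 3}
    (hc : G.IsProperEdgeColoring c) :
    HasAntiDirected2Factor (fun u v => G.Adj u v) := by
  obtain ⟨f, hf, hfc⟩ := hc.exists_involutive hG 0
  obtain ⟨g, hg, hgc⟩ := hc.exists_involutive hG 1
  refine hasAntiDirected2Factor_of_involutions G hf hg (fun v => (hfc v).1) (fun v => (hgc v).1)
    fun v hv => ?_
  have := (hgc v).2
  rw [← hv, (hfc v).2] at this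
  exact absurd this (by decide)

theorem eq_of_adj_of_not_adj_of_ncard_eq_succ {G H : SimpleGraph V} (hHG : H ≤ G) {u v w : V}
    (hdeg : (G.neighborSet u).ncard = (H.neighborSet u).ncard + 1)
    (hv : G.Adj u v) (hv' : ¬ H.Adj u v) (hw : G.Adj u w) (hw' : ¬ H.Adj u w) : v = w := by
  have hfin : (G.neighborSet u).Finite := Set.finite_of_ncard_pos (by omega)
  have hsub : H.neighborSet u ⊆ G.neighborSet u := fun x hx => hHG hx
  have hdiff : (G.neighborSet u \ H.neighborSet u).ncard ≤ 1 := by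
    rw [Set.ncard_sdiff' hsub hfin]; omega
  exact (Set.ncard_le_one_iff hfin.sdiff).1 hdiff ⟨hv, hv'⟩ ⟨hw, hw'⟩

theorem exists_isProperEdgeColoring_of_le_of_le {M H G : SimpleGraph V} (hMH : M ≤ H)
    (hHG : H ≤ G) (hM : ∀ v, (M.neighborSet v).ncard = 1)
    (hH : ∀ v, (H.neighborSet v).ncard = 2) (hG : ∀ v, (G.neighborSet v).ncard = 3) :
    ∃ c : Sym2 V → Fin 3, G.IsProperEdgeColoring c := by
  classical
  refine ⟨fun e => if e ∈ M.edgeSet then 0 else if e ∈ H.edgeSet then 1 else 2, ?_⟩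
  intro u v w huv huw hvw hc
  simp only [mem_edgeSet] at hc
  -- Each colour class lies between consecutive layers of `⊥ ≤ M ≤ H ≤ G`, whose degrees at `u`
  -- differ by one, so it contains at most one edge at `u`.
  split_ifs at hc <;> first
    | exact absurd hc (by decide)
    | exact hvw (eq_of_adj_of_not_adj_of_ncard_eq_succ (u := u) (bot_le : ⊥ ≤ M)
        (by simp [hM u]) ‹_› id ‹_› id)
    | exact hvw (eq_of_adj_of_not_adj_of_ncard_eq_succ (u := u) hMH
        (by rw [hH, hM]) ‹_› ‹_› ‹_› ‹_›)
    | exact hvw (eq_of_adj_of_not_adj_of_ncard_eq_succ (u := u) hHG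
        (by rw [hG, hH]) huv ‹_› huw ‹_›)

theorem IsRegularOfDegree.ncard_le_ncard_iUnion_neighborSet {G : SimpleGraph V}
    [G.LocallyFinite] {d : ℕ} (hG : G.IsRegularOfDegree d) (hd : 0 < d) (s : Set V) :
    s.ncard ≤ (⋃ x ∈ s, G.neighborSet x).ncard := by
  classical
  rcases s.finite_or_infinite with hs | hs
  swap
  · simp [hs.ncard]
  obtain ⟨t, rfl⟩ := hs.exists_finset_coe
  set N := t.biUnion fun x => G.neighborFinset x
  have hN : ⋃ x ∈ (t : Set V), G.neighborSet x = N := by ext; simp [N]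
  rw [hN, Set.ncard_coe_finset, Set.ncard_coe_finset]
  -- Double counting the edges between `t` and `N`: each vertex of `t` sends `d` of them into
  -- `N`, and each vertex of `N` receives at most `d`.
  refine Nat.le_of_mul_le_mul_right (Finset.card_mul_le_card_mul G.Adj (fun a ha => ?_)
    (fun b _ => ?_)) hd
  · rw [← hG.degree_eq a, ← card_neighborFinset_eq_degree]
    refine Finset.card_le_card fun b hb => ?_
    rw [mem_neighborFinset] at hb
    exact (Finset.mem_bipartiteAbove _).2 ⟨Finset.mem_biUnion.2 ⟨a, ha, by simpa using hb⟩, hb⟩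
  · rw [← hG.degree_eq b, ← card_neighborFinset_eq_degree]
    refine Finset.card_le_card fun a ha => ?_
    rw [mem_neighborFinset]
    exact ((Finset.mem_bipartiteBelow _).1 ha).2.symm

theorem IsBipartiteWith.exists_isPerfectMatching_of_isRegularOfDegree {G : SimpleGraph V}
    [G.LocallyFinite] {s t : Set V} {d : ℕ} (hb : G.IsBipartiteWith s t)
    (hG : G.IsRegularOfDegree d) (hd : 0 < d) : ∃ M : G.Subgraph, M.IsPerfectMatching :=
  exists_isPerfectMatching_of_forall_ncard_le hb (hG.ncard_le_ncard_iUnion_neighborSet hd)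

end SimpleGraph

open SimpleGraph

namespace AntiDirected2Factor

variable {V : Type*} {S : Set V} {H : SimpleGraph V}

theorem le {G : SimpleGraph V} (h : AntiDirected2Factor (fun u v => G.Adj u v) S H) : H ≤ G :=
  fun u v huv => by rcases h.2 u v huv with ⟨-, -, h⟩ | ⟨-, -, h⟩ <;> [exact h; exact h.symm]

theorem isBipartiteWith {A : V → V → Prop} (h : AntiDirected2Factor A S H) :
    H.IsBipartiteWith S Sᶜ where
  disjoint := disjoint_compl_right
  mem_of_adj u v huv := by
    rcases h.2 u v huv with ⟨hu, hv, -⟩ | ⟨hv, hu, -⟩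
    exacts [Or.inl ⟨hu, hv⟩, Or.inr ⟨hu, hv⟩]

theorem exists_isProperEdgeColoring {G : SimpleGraph V} (hG : ∀ v, (G.neighborSet v).ncard = 3)
    (h : AntiDirected2Factor (fun u v => G.Adj u v) S H) :
    ∃ c : Sym2 V → Fin 3, G.IsProperEdgeColoring c := by
  have : H.LocallyFinite := fun v => (Set.finite_of_ncard_pos (by rw [h.1 v]; norm_num)).fintype
  have hreg : H.IsRegularOfDegree 2 := fun v => by
    rw [← card_neighborSet_eq_degree, ← Nat.card_eq_fintype_card, Nat.card_coe_set_eq, h.1 v]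
  obtain ⟨M, hM⟩ := h.isBipartiteWith.exists_isPerfectMatching_of_isRegularOfDegree hreg two_pos
  refine exists_isProperEdgeColoring_of_le_of_le M.spanningCoe_le h.le (fun v => ?_) h.1 hG
  obtain ⟨w, hw, huniq⟩ := Subgraph.isPerfectMatching_iff.1 hM v
  exact Set.ncard_eq_one.2 ⟨w, Set.ext fun x => ⟨huniq x, fun hx => hx ▸ hw⟩⟩

end AntiDirected2Factor

theorem cubic_three_edge_colorable_iff_antiDirected2Factor_general {V : Type*}
    (G : SimpleGraph V) (hcubic : ∀ v : V, (G.neighborSet v).ncard = 3) :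
    (∃ c : Sym2 V → Fin 3, ∀ u v w : V, G.Adj u v → G.Adj u w → v ≠ w →
        c s(u, v) ≠ c s(u, w)) ↔
      HasAntiDirected2Factor (fun u v => G.Adj u v) :=
  ⟨fun ⟨_, hc⟩ => hasAntiDirected2Factor_of_isProperEdgeColoring hcubic hc,
    fun ⟨_, _, h⟩ => h.exists_isProperEdgeColoring hcubic⟩

/-- A cubic graph `G` is 3-edge-colorable iff the digraph obtained by replacing each
edge by two oppositely directed arcs has an anti-directed 2-factor. -/
theorem cubic_three_edge_colorable_iff_antiDirected2Factor {V : Type*} [Fintype V]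
    (G : SimpleGraph V) (hcubic : ∀ v : V, (G.neighborSet v).ncard = 3) :
    (∃ c : Sym2 V → Fin 3, ∀ u v w : V, G.Adj u v → G.Adj u w → v ≠ w →
        c s(u, v) ≠ c s(u, w)) ↔
      HasAntiDirected2Factor (fun u v => G.Adj u v) :=
  cubic_three_edge_colorable_iff_antiDirected2Factor_general G hcubic
end

section
/- Let G be a bipartite graph with equipartition V(G) = X ∪ Y. If U ⊆ X is a minimal deficient set of vertices (i.e., |N^(2)(U)| < 2|U| and no proper subset of U is deficient), then 2|U| − 2 ≤ |N^(2)(U)|. -/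
/-- Number of neighbours in `U` of the vertex `y`, for the bipartite graph with
parts `α`, `β` given by the relation `R`. -/
noncomputable def nbrIn {α β : Type*} (R : α → β → Prop) (U : Set α) (y : β) : ℕ :=
  {x | x ∈ U ∧ R x y}.ncard

/-- `|N^(2)(U)|`: each neighbour of `U` is counted with multiplicity
`min 2 (number of its neighbours in U)`. -/
noncomputable def N2 {α β : Type*} [Fintype β] (R : α → β → Prop) (U : Set α) : ℕ :=
  ∑ y : β, min 2 (nbrIn R U y)

/-- `U` is a deficient set: `|N^(2)(U)| < 2|U|`. -/
def Deficient {α β : Type*} [Fintype β] (R : α → β → Prop) (U : Set α) : Prop :=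
  N2 R U < 2 * U.ncard

/-- `U` is a minimal deficient set. -/
def MinimalDeficient {α β : Type*} [Fintype β] (R : α → β → Prop) (U : Set α) : Prop :=
  Deficient R U ∧ ∀ W ⊂ U, ¬ Deficient R W

/-- Degree of a vertex `x ∈ α` in the bipartite graph `R`. -/
noncomputable def degX {α β : Type*} (R : α → β → Prop) (x : α) : ℕ := {y | R x y}.ncard

/-- Degree of a vertex `y ∈ β` in the bipartite graph `R`. -/
noncomputable def degY {α β : Type*} (R : α → β → Prop) (y : β) : ℕ := {x | R x y}.ncard

/-- The bipartite graph `R` has a 2-factor: a spanning subgraph in which every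
vertex has degree exactly `2`. -/
def HasBipTwoFactor {α β : Type*} (R : α → β → Prop) : Prop :=
  ∃ H : α → β → Prop, (∀ x y, H x y → R x y) ∧
    (∀ x, {y | H x y}.ncard = 2) ∧ (∀ y, {x | H x y}.ncard = 2)

/-! Deleting a vertex `u` from `U` can only shrink the neighbour counts, so
`N2 R (U \ {u}) ≤ N2 R U`, while `2|U|` drops by exactly `2`. By minimality `U \ {u}` is not
deficient, hence `2|U| - 2 ≤ N2 R (U \ {u}) ≤ N2 R U`. -/

theorem nbrIn_sdiff_singleton_le {α β : Type*} (R : α → β → Prop) (U : Set α) (u : α) (y : β) :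
    nbrIn R (U \ {u}) y ≤ nbrIn R U y := by
  have hnbr : {x | x ∈ U \ {u} ∧ R x y} = {x | x ∈ U ∧ R x y} \ {u} := by
    ext x
    simp only [Set.mem_sdiff, Set.mem_ofPred_eq, Set.mem_singleton_iff]
    tauto
  unfold nbrIn
  rw [hnbr]
  exact Set.ncard_sdiff_singleton_le _ u

theorem N2_sdiff_singleton_le {α β : Type*} [Fintype β] (R : α → β → Prop) (U : Set α) (u : α) :
    N2 R (U \ {u}) ≤ N2 R U :=
  Finset.sum_le_sum fun y _ => min_le_min_left 2 (nbrIn_sdiff_singleton_le R U u y)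

theorem minimalDeficient_lower_bound_general {α β : Type*} [Fintype β]
    (R : α → β → Prop)
    (U : Set α) (hU : MinimalDeficient R U) :
    2 * U.ncard ≤ N2 R U + 2 := by
  rcases U.eq_empty_or_nonempty with rfl | ⟨u, hu⟩
  · simp
  have hsmaller : ¬ Deficient R (U \ {u}) := hU.2 _ (Set.sdiff_singleton_ssubset.mpr hu)
  rw [Deficient, Set.ncard_sdiff_singleton_of_mem hu] at hsmaller
  have hmono := N2_sdiff_singleton_le R U u
  omega

/-- If `U` is a minimal deficient set in a bipartite graph with equipartition, then
`2|U| - 2 ≤ |N^(2)(U)|`. -/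
theorem minimalDeficient_lower_bound {α β : Type*} [Fintype α] [Fintype β]
    (R : α → β → Prop) (hcard : Fintype.card α = Fintype.card β)
    (U : Set α) (hU : MinimalDeficient R U) :
    2 * U.ncard ≤ N2 R U + 2 :=
  minimalDeficient_lower_bound_general R U hU
end

section
/- Let G be a bipartite graph with equipartition V(G) = X ∪ Y, let U ⊆ X be a minimal deficient set, and let M be the set of vertices of N(U) adjacent to exactly one vertex of U. Then no vertex of U is adjacent to more than one vertex of M. -/
/-! A vertex `u` of a minimal deficient set `U` with two private neighbours could be removed:
both of them stop counting towards `N^(2)`, so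
`|N^(2)(U \ {u})| ≤ |N^(2)(U)| - 2 < 2|U| - 2 = 2|U \ {u}|`, and `U \ {u}` would be a smaller deficient set. -/

section
variable {α β : Type*} (R : α → β → Prop)

theorem nbrIn_mono {W U : Set α} (hU : U.Finite) (hWU : W ⊆ U) (y : β) :
    nbrIn R W y ≤ nbrIn R U y :=
  Set.ncard_le_ncard (fun _ hx => ⟨hWU hx.1, hx.2⟩) (hU.subset fun _ hx => hx.1)

theorem nbrIn_sdiff_singleton_eq_zero {U : Set α} {u : α} {y : β} (hu : u ∈ U) (hy : R u y)
    (h1 : nbrIn R U y = 1) : nbrIn R (U \ {u}) y = 0 := by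
  obtain ⟨a, ha⟩ := Set.ncard_eq_one.mp h1
  have hS : {x | x ∈ U ∧ R x y} = {u} := by
    have hu' : u ∈ {x | x ∈ U ∧ R x y} := ⟨hu, hy⟩
    rw [ha, Set.mem_singleton_iff] at hu'
    rw [ha, hu']
  have hdiff : {x | x ∈ U \ {u} ∧ R x y} = {x | x ∈ U ∧ R x y} \ {u} := by
    ext x
    simp only [Set.mem_ofPred_eq, Set.mem_sdiff]
    tauto
  rw [nbrIn, hdiff, hS, Set.sdiff_self, Set.ncard_empty]

variable [Fintype β]

-- Each neighbour private to `u` counts once for `U` and not at all for `U \ {u}`.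
theorem N2_sdiff_singleton_add_ncard_private_le {U : Set α} (hU : U.Finite) {u : α}
    (hu : u ∈ U) :
    N2 R (U \ {u}) + {y : β | nbrIn R U y = 1 ∧ R u y}.ncard ≤ N2 R U := by
  classical
  have hpoint : ∀ y, min 2 (nbrIn R (U \ {u}) y) + (if nbrIn R U y = 1 ∧ R u y then 1 else 0)
      ≤ min 2 (nbrIn R U y) := by
    intro y
    split_ifs with hy
    · rw [nbrIn_sdiff_singleton_eq_zero R hu hy.2 hy.1, hy.1]; rfl
    · exact min_le_min le_rfl (nbrIn_mono R hU Set.sdiff_subset y)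
  calc N2 R (U \ {u}) + {y : β | nbrIn R U y = 1 ∧ R u y}.ncard
      = ∑ y, (min 2 (nbrIn R (U \ {u}) y) + if nbrIn R U y = 1 ∧ R u y then 1 else 0) := by
        rw [Finset.sum_add_distrib, Finset.sum_boole, Set.ncard_eq_toFinset_card',
          Set.toFinset_ofPred, N2, Nat.cast_id]
    _ ≤ N2 R U := Finset.sum_le_sum fun y _ => hpoint y

-- An infinite `U` has `ncard = 0` and so cannot be deficient.
theorem Deficient.finite {U : Set α} (hU : Deficient R U) : U.Finite :=
  Set.finite_of_ncard_pos (by unfold Deficient at hU; omega)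

theorem Deficient.sdiff_singleton {U : Set α} {u : α} (hU : Deficient R U) (hu : u ∈ U)
    (h : N2 R (U \ {u}) + 2 ≤ N2 R U) : Deficient R (U \ {u}) := by
  have hcard := Set.ncard_sdiff_singleton_add_one hu hU.finite
  unfold Deficient at hU ⊢
  omega

end

theorem minimalDeficient_at_most_one_private_neighbor_general {α β : Type*} [Fintype β]
    (R : α → β → Prop)
    (U : Set α) (hU : MinimalDeficient R U) :
    ∀ u ∈ U, {y : β | nbrIn R U y = 1 ∧ R u y}.ncard ≤ 1 := by
  intro u hu
  by_contra! htwo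
  have hdrop := N2_sdiff_singleton_add_ncard_private_le R hU.1.finite hu
  exact hU.2 _ (Set.sdiff_singleton_ssubset.mpr hu) (hU.1.sdiff_singleton R hu (by omega))

/-- If `U` is a minimal deficient set and `M` is the set of vertices of `N(U)` adjacent
to exactly one vertex of `U`, then no vertex of `U` is adjacent to more than one vertex
of `M`. -/
theorem minimalDeficient_at_most_one_private_neighbor {α β : Type*} [Fintype α] [Fintype β]
    (R : α → β → Prop) (hcard : Fintype.card α = Fintype.card β)
    (U : Set α) (hU : MinimalDeficient R U) :
    ∀ u ∈ U, {y : β | nbrIn R U y = 1 ∧ R u y}.ncard ≤ 1 :=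
  minimalDeficient_at_most_one_private_neighbor_general R U hU
end

section
/- Let G be a bipartite graph with equipartition V(G) = X ∪ Y and suppose U ⊆ X is a minimal deficient set. Let Y₀ be the vertices of Y with no neighbor in U, Y₁ those with exactly one neighbor in U, and set U* = Y₀ ∪ Y₁. Then U* is a deficient set in G. -/
open Finset

section
open scoped Classical

variable {α β : Type*} (R : α → β → Prop)

theorem nbrIn_coe_eq_card_bipartiteBelow (s : Finset α) (y : β) :
    nbrIn R s y = #(s.bipartiteBelow R y) := by
  rw [nbrIn, bipartiteBelow, ← Set.ncard_coe_finset]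
  congr
  ext
  simp

theorem sum_nbrIn_swap (s : Finset α) (t : Finset β) :
    ∑ x ∈ s, nbrIn (fun y x => R x y) t x = ∑ y ∈ t, nbrIn R s y := by
  simp only [nbrIn_coe_eq_card_bipartiteBelow]
  exact sum_card_bipartiteAbove_eq_sum_card_bipartiteBelow _

theorem N2_le_sum_nbrIn_add [Fintype β] (U : Set α) (t : Finset β) :
    N2 R U ≤ ∑ y ∈ t, nbrIn R U y + 2 * #tᶜ := by
  rw [N2, ← sum_add_sum_compl t, mul_comm, ← smul_eq_mul, ← sum_const]
  exact add_le_add (sum_le_sum fun _ _ => min_le_right _ _)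
    (sum_le_sum fun _ _ => min_le_left _ _)

theorem N2_eq_sum_nbrIn_add [Fintype β] (U : Set α) (t : Finset β)
    (ht : ∀ y ∈ t, nbrIn R U y ≤ 2) (htc : ∀ y ∈ tᶜ, 2 ≤ nbrIn R U y) :
    N2 R U = ∑ y ∈ t, nbrIn R U y + 2 * #tᶜ := by
  rw [N2, ← sum_add_sum_compl t, mul_comm, ← smul_eq_mul, ← sum_const]
  exact congrArg₂ (· + ·) (sum_congr rfl fun y hy => min_eq_right (ht y hy))
    (sum_congr rfl fun y hy => min_eq_left (htc y hy))

end

/-- If `U ⊆ X` is a minimal deficient set, `Y₀` the vertices of `Y` with no neighbour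
in `U`, `Y₁` those with exactly one neighbour in `U`, then `U* = Y₀ ∪ Y₁` is a
deficient set (in the bipartite graph viewed from the side `Y`). -/
theorem minimalDeficient_dual_deficient {α β : Type*} [Fintype α] [Fintype β]
    (R : α → β → Prop) (hcard : Fintype.card α = Fintype.card β)
    (U : Set α) (hU : MinimalDeficient R U) :
    Deficient (fun y x => R x y)
      ({y : β | nbrIn R U y = 0} ∪ {y : β | nbrIn R U y = 1}) := by
  classical
  lift U to Finset α using U.toFinite
  set t : Finset β := {y | nbrIn R U y ≤ 1} with ht
  have hUstar : {y : β | nbrIn R U y = 0} ∪ {y : β | nbrIn R U y = 1} = ↑t := by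
    ext y
    simp only [ht, Set.mem_union, Set.mem_ofPred_eq, coe_filter, mem_univ, true_and]
    omega
  have hdef : N2 R U < 2 * #U := by simpa [Deficient] using hU.1
  have hN2 := N2_eq_sum_nbrIn_add R U t
    (fun y hy => by simp only [ht, mem_filter, mem_univ, true_and] at hy; omega)
    (fun y hy => by
      simp only [ht, compl_filter, not_le, mem_filter, mem_univ, true_and] at hy; omega)
  have hN2dual := N2_le_sum_nbrIn_add (fun y x => R x y) t U
  have hcount := sum_nbrIn_swap R U t
  rw [card_compl] at hN2 hN2dual
  rw [hUstar, Deficient, Set.ncard_coe_finset]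
  have := card_le_univ U
  have := card_le_univ t
  omega
end

section
/- Let x, y, s be positive real numbers with x ≥ y > s/2 and s an even positive integer. Then the ratio (x(x+1)(x+2)⋯(x+s)) / (y(y+1)(y+2)⋯(y+s)) is at least ((x + s/2)/(y + s/2))². -/
/-!
Centre the product at `c = x + m` where `s = 2m`: pairing the factors `c - k` and `c + k` turns
`x(x+1)⋯(x+s)` into `c · ∏_{k=1}^m (c² - k²)`. With `a = x + m ≥ b = y + m > m`, the middle factors
contribute the ratio `a / b ≥ 1` and each pair the ratio `(a² - k²)/(b² - k²) ≥ (a/b)²`, so the whole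
ratio is at least `(a/b)^(2m+1) ≥ (a/b)²`.
-/

open Finset

theorem prod_range_two_mul_add_one_add {R : Type*} [CommRing R] (m : ℕ) (x : R) :
    ∏ i ∈ range (2 * m + 1), (x + i) = (x + m) * ∏ r ∈ range m, ((x + m) ^ 2 - (r + 1) ^ 2) := by
  induction m generalizing x with
  | zero => simp
  | succ m ih =>
    rw [show 2 * (m + 1) + 1 = 2 * m + 1 + 1 + 1 by ring, prod_range_succ, prod_range_succ']
    simp_rw [Nat.cast_succ, ← add_assoc, add_right_comm x _ 1]
    rw [ih (x + 1), prod_range_succ]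
    push_cast
    ring

theorem div_sq_le_sq_sub_sq_div_sq_sub_sq {α : Type*} [Field α] [LinearOrder α]
    [IsStrictOrderedRing α] {a b t : α} (ht : 0 ≤ t) (htb : t < b) (hba : b ≤ a) :
    (a / b) ^ 2 ≤ (a ^ 2 - t ^ 2) / (b ^ 2 - t ^ 2) := by
  have hb : 0 < b := ht.trans_lt htb
  have hbt : 0 < b ^ 2 - t ^ 2 := by nlinarith
  have hba2 : b ^ 2 ≤ a ^ 2 := pow_le_pow_left₀ hb.le hba 2
  rw [div_pow, div_le_div_iff₀ (by positivity) hbt]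
  nlinarith [mul_le_mul_of_nonneg_right hba2 (sq_nonneg t)]

theorem pow_le_prod_sq_sub_sq_div {α : Type*} [Field α] [LinearOrder α]
    [IsStrictOrderedRing α] (m : ℕ) {a b : α} (hmb : (m : α) < b) (hba : b ≤ a) :
    ((a / b) ^ 2) ^ m ≤ ∏ r ∈ range m, (a ^ 2 - (r + 1) ^ 2) / (b ^ 2 - (r + 1) ^ 2) := by
  calc ((a / b) ^ 2) ^ m = ∏ _r ∈ range m, (a / b) ^ 2 := by rw [prod_const, card_range]
    _ ≤ _ := prod_le_prod (fun _ _ ↦ by positivity) fun r hr ↦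
      div_sq_le_sq_sub_sq_div_sq_sub_sq (by positivity)
        (lt_of_le_of_lt (by exact_mod_cast mem_range.mp hr) hmb) hba

theorem rising_factorial_ratio_ge_general {x y : ℝ} {s : ℕ} (hs : Even s) (hspos : 0 < s)
    (hypos : 0 < y) (hxy : y ≤ x) :
    ((x + (s : ℝ) / 2) / (y + (s : ℝ) / 2)) ^ 2 ≤
      (∏ i ∈ Finset.range (s + 1), (x + (i : ℝ))) /
        (∏ i ∈ Finset.range (s + 1), (y + (i : ℝ))) := by
  obtain ⟨m, rfl⟩ := even_iff_two_dvd.mp hs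
  have hhalf : ((2 * m : ℕ) : ℝ) / 2 = m := by push_cast; ring
  rw [hhalf, prod_range_two_mul_add_one_add, prod_range_two_mul_add_one_add,
    mul_div_mul_comm, ← prod_div_distrib]
  have hb : 0 < y + m := by positivity
  have hba : y + m ≤ x + m := by linarith
  calc ((x + m) / (y + m)) ^ 2
      ≤ ((x + m) / (y + m)) ^ (2 * m + 1) :=
        pow_le_pow_right₀ ((one_le_div hb).mpr hba) (by omega)
    _ = (x + m) / (y + m) * (((x + m) / (y + m)) ^ 2) ^ m := by
        rw [pow_succ, pow_mul, mul_comm]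
    _ ≤ _ := mul_le_mul_of_nonneg_left
        (pow_le_prod_sq_sub_sq_div m (by linarith) hba) (div_pos (hb.trans_le hba) hb).le

/-- Lemma 5 of the paper: for positive reals `x ≥ y > s/2` with `s` an even positive
integer, `(x(x+1)⋯(x+s)) / (y(y+1)⋯(y+s)) ≥ ((x + s/2)/(y + s/2))²`. -/
theorem rising_factorial_ratio_ge {x y : ℝ} {s : ℕ} (hs : Even s) (hspos : 0 < s)
    (hxpos : 0 < x) (hypos : 0 < y) (hxy : y ≤ x) (hy : (s : ℝ) / 2 < y) :
    ((x + (s : ℝ) / 2) / (y + (s : ℝ) / 2)) ^ 2 ≤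
      (∏ i ∈ Finset.range (s + 1), (x + (i : ℝ))) /
        (∏ i ∈ Finset.range (s + 1), (y + (i : ℝ))) :=
  rising_factorial_ratio_ge_general hs hspos hypos hxy
end

section
/- Let n = 4m and δ = 2d = n/2 + s with s ≥ 1 an even integer, and for 0 ≤ k < n/4 − 3 define A_k = 2·C(δ, d + k)·C(n − δ − 1, 2m − d − k) and B_k = 2·C(δ, m − k − 1)·C(n − δ − 1, m + k + 1). Then (A_{k+1}/A_k) / (B_{k+1}/B_k) = [(n/4 + s/2 − k)(n/4 − s/2 − k)(n/4 + s + k + 2)(n/4 + k + 2)] / [(n/4 − k − 1)(n/4 − s − k − 2)(n/4 + s/2 + k + 1)(n/4 − s/2 + k)], and this ratio is at least (n/4 − k − 1)/(n/4 − k − 2). -/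
/-- `A k` from the proof of Theorem 7: with `n = 4m`, `δ = 2d`,
`A k = 2·C(δ, d+k)·C(n-δ-1, 2m-d-k)`, as a rational number. -/
def Aterm (m d k : ℕ) : ℚ :=
  2 * ((2 * d).choose (d + k) : ℚ) * ((4 * m - 2 * d - 1).choose (2 * m - d - k) : ℚ)

/-- `B k` from the proof of Theorem 7: `B k = 2·C(δ, m-k-1)·C(n-δ-1, m+k+1)`. -/
def Bterm (m d k : ℕ) : ℚ :=
  2 * ((2 * d).choose (m - k - 1) : ℚ) * ((4 * m - 2 * d - 1).choose (m + k + 1) : ℚ)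

/-!
Both `A` and `B` are products of two binomial coefficients, so each of `A_{k+1}/A_k` and
`B_{k+1}/B_k` is a product of two elementary ratios `C(a, j+1)/C(a, j) = (a - j)/(j + 1)`;
substituting `δ = n/2 + s` gives the identity. For the estimate, write the right-hand side as
the product of the four quotients `(n/4 + s/2 - k)/(n/4 - k - 1)`,
`(n/4 - s/2 - k)/(n/4 - s - k - 2)`, `(n/4 + s + k + 2)/(n/4 + s/2 + k + 1)` and
`(n/4 + k + 2)/(n/4 - s/2 + k)`: three of them are at least `1`, and the second one is at least
`(n/4 - k - 1)/(n/4 - k - 2)`.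
-/

theorem Nat.cast_choose_succ_div_cast_choose {K : Type*} [Field K] [CharZero K] {n k : ℕ}
    (hk : k ≤ n) : (n.choose (k + 1) : K) / n.choose k = (n - k) / (k + 1) := by
  have hpos : (n.choose k : K) ≠ 0 := by exact_mod_cast (Nat.choose_pos hk).ne'
  rw [div_eq_div_iff hpos (Nat.cast_add_one_ne_zero k), ← Nat.cast_sub hk]
  exact_mod_cast (Nat.choose_succ_right_eq n k).trans (mul_comm _ _)

theorem Nat.cast_choose_div_cast_choose_succ {K : Type*} [Field K] [CharZero K] {n k : ℕ}
    (hk : k ≤ n) : (n.choose k : K) / n.choose (k + 1) = (k + 1) / (n - k) := by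
  rw [← inv_div, Nat.cast_choose_succ_div_cast_choose hk, inv_div]

theorem Aterm_succ_div_Aterm {m d k : ℕ} (hkd : k ≤ d) (hdk : d + k < 2 * m) :
    Aterm m d (k + 1) / Aterm m d k =
      ((d : ℚ) - k) / (d + k + 1) * ((2 * m - d - k) / (2 * m - d + k)) := by
  obtain ⟨j, hj⟩ : ∃ j, 2 * m - d - k = j + 1 := ⟨2 * m - d - k - 1, by omega⟩
  have hjq : (j : ℚ) = 2 * m - d - k - 1 := by
    rw [eq_sub_iff_add_eq, eq_sub_iff_add_eq, eq_sub_iff_add_eq]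
    exact_mod_cast (by omega : j + 1 + k + d = 2 * m)
  have hNq : ((4 * m - 2 * d - 1 : ℕ) : ℚ) = 4 * m - 2 * d - 1 := by
    rw [Nat.cast_sub (by omega), Nat.cast_sub (by omega)]
    push_cast; ring
  unfold Aterm
  rw [hj, show 2 * m - d - (k + 1) = j by omega, ← add_assoc, mul_assoc, mul_assoc,
    mul_div_mul_left _ _ two_ne_zero, mul_div_mul_comm,
    Nat.cast_choose_succ_div_cast_choose (by omega),
    Nat.cast_choose_div_cast_choose_succ (by omega), hNq, hjq]
  push_cast
  congr 1 <;> congr 1 <;> ring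

theorem Bterm_succ_div_Bterm {m d k : ℕ} (hkm : k + 2 ≤ m) (hmd : m ≤ 2 * d + k + 2)
    (hdm : 2 * d + k + 2 ≤ 3 * m) :
    Bterm m d (k + 1) / Bterm m d k =
      ((m : ℚ) - k - 1) / (2 * d - m + k + 2) * ((3 * m - 2 * d - k - 2) / (m + k + 2)) := by
  obtain ⟨j, hj⟩ : ∃ j, m - k - 1 = j + 1 := ⟨m - k - 2, by omega⟩
  have hjq : (j : ℚ) = m - k - 2 := by
    rw [eq_sub_iff_add_eq, eq_sub_iff_add_eq]
    exact_mod_cast (by omega : j + 2 + k = m)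
  have hNq : ((4 * m - 2 * d - 1 : ℕ) : ℚ) = 4 * m - 2 * d - 1 := by
    rw [Nat.cast_sub (by omega), Nat.cast_sub (by omega)]
    push_cast; ring
  unfold Bterm
  rw [hj, show m - (k + 1) - 1 = j by omega, ← add_assoc, mul_assoc, mul_assoc,
    mul_div_mul_left _ _ two_ne_zero, mul_div_mul_comm,
    Nat.cast_choose_div_cast_choose_succ (by omega),
    Nat.cast_choose_succ_div_cast_choose (by omega), hNq, hjq]
  push_cast
  congr 1 <;> congr 1 <;> ring

theorem sub_one_div_sub_two_le_ratio {K : Type*} [Field K] [LinearOrder K] [IsStrictOrderedRing K]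
    {m s k : K}
    (hs : 0 ≤ s) (hk : 0 ≤ k) (hm : s + k + 2 < m) :
    (m - k - 1) / (m - k - 2) ≤
      ((m + s / 2 - k) * (m - s / 2 - k) * (m + s + k + 2) * (m + k + 2)) /
        ((m - k - 1) * (m - s - k - 2) * (m + s / 2 + k + 1) * (m - s / 2 + k)) := by
  have h1 : 1 ≤ (m + s / 2 - k) / (m - k - 1) := (one_le_div (by linarith)).mpr (by linarith)
  have h2 : (m - k - 1) / (m - k - 2) ≤ (m - s / 2 - k) / (m - s - k - 2) := by
    rw [div_le_div_iff₀ (by linarith) (by linarith)]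
    -- the two cross products differ by `(s/2 + 1)(m - k) - 2`
    nlinarith [mul_nonneg hs (by linarith : (0 : K) ≤ m - k - 2)]
  have h3 : 1 ≤ (m + s + k + 2) / (m + s / 2 + k + 1) :=
    (one_le_div (by linarith)).mpr (by linarith)
  have h4 : 1 ≤ (m + k + 2) / (m - s / 2 + k) := (one_le_div (by linarith)).mpr (by linarith)
  have h2_nonneg : 0 ≤ (m - s / 2 - k) / (m - s - k - 2) := div_nonneg (by linarith) (by linarith)
  rw [← div_mul_div_comm, ← div_mul_div_comm, ← div_mul_div_comm]
  calc (m - k - 1) / (m - k - 2)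
      ≤ (m - s / 2 - k) / (m - s - k - 2) := h2
    _ ≤ (m + s / 2 - k) / (m - k - 1) * ((m - s / 2 - k) / (m - s - k - 2)) :=
      le_mul_of_one_le_left h2_nonneg h1
    _ ≤ _ := le_mul_of_one_le_right (by positivity) h3
    _ ≤ _ := le_mul_of_one_le_right (by positivity) h4

theorem ratio_identity_and_bound_general (m d s k : ℕ)
    (hδ : 2 * d = 2 * m + s) (hks : s + k + 2 < m) :
    (Aterm m d (k + 1) / Aterm m d k) / (Bterm m d (k + 1) / Bterm m d k) =
        (((m : ℚ) + (s : ℚ) / 2 - k) * ((m : ℚ) - (s : ℚ) / 2 - k) *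
            ((m : ℚ) + s + k + 2) * ((m : ℚ) + k + 2)) /
          (((m : ℚ) - k - 1) * ((m : ℚ) - s - k - 2) *
            ((m : ℚ) + (s : ℚ) / 2 + k + 1) * ((m : ℚ) - (s : ℚ) / 2 + k)) ∧
      ((m : ℚ) - k - 1) / ((m : ℚ) - k - 2) ≤
        (Aterm m d (k + 1) / Aterm m d k) / (Bterm m d (k + 1) / Bterm m d k) := by
  have hd : (d : ℚ) = m + s / 2 := by
    have : ((2 * d : ℕ) : ℚ) = ((2 * m + s : ℕ) : ℚ) := congrArg _ hδ
    push_cast at this; linarith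
  have bound : ((m : ℚ) - k - 1) / ((m : ℚ) - k - 2) ≤ _ :=
    sub_one_div_sub_two_le_ratio (s := (s : ℚ)) (by positivity) (by positivity)
      (by exact_mod_cast hks)
  rw [Aterm_succ_div_Aterm (by omega) (by omega), Bterm_succ_div_Bterm (by omega) (by omega)
    (by omega), div_mul_div_comm, div_mul_div_comm, div_div_div_eq, hd]
  refine ⟨?_, bound.trans_eq ?_⟩ <;> congr 1 <;> ring

/-- Equation (9) of the paper and the subsequent estimate: with `n = 4m`,
`δ = 2d = n/2 + s`, `s ≥ 1` even, `0 ≤ k < n/4 - 3` and all the binomial coefficients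
involved positive, the ratio `(A_{k+1}/A_k)/(B_{k+1}/B_k)` equals the displayed product
and is at least `(n/4 - k - 1)/(n/4 - k - 2)`. -/
theorem ratio_identity_and_bound (m d s k : ℕ) (hs : Even s) (hs1 : 1 ≤ s)
    (hδ : 2 * d = 2 * m + s) (hk : k + 3 < m) (hks : s + k + 2 < m)
    (h1 : 2 * d ≤ 4 * m - 1) (h2 : 2 * m - d - k ≤ 4 * m - 2 * d - 1)
    (h3 : m + k + 2 ≤ 4 * m - 2 * d - 1) :
    (Aterm m d (k + 1) / Aterm m d k) / (Bterm m d (k + 1) / Bterm m d k) =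
        (((m : ℚ) + (s : ℚ) / 2 - k) * ((m : ℚ) - (s : ℚ) / 2 - k) *
            ((m : ℚ) + s + k + 2) * ((m : ℚ) + k + 2)) /
          (((m : ℚ) - k - 1) * ((m : ℚ) - s - k - 2) *
            ((m : ℚ) + (s : ℚ) / 2 + k + 1) * ((m : ℚ) - (s : ℚ) / 2 + k)) ∧
      ((m : ℚ) - k - 1) / ((m : ℚ) - k - 2) ≤
        (Aterm m d (k + 1) / Aterm m d k) / (Bterm m d (k + 1) / Bterm m d k) :=
  ratio_identity_and_bound_general m d s k hδ hks
end

section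
/- A bipartite graph G with equipartition X ∪ Y contains a 2-factor if and only if |N^(2)(U)| ≥ 2|U| for every U ⊆ X. -/
/-!
The easy direction is double counting: the `2|U|` edges of a 2-factor leaving `U` reach each `y`
at most `min 2 (deg_U y)` times.

For the converse, apply Hall's theorem to an auxiliary bipartite graph. Its left side has two
copies `(x, i)` of every `x` and one vertex for every pair `(x, y)`, its right side two copies
`(y, j)` of every `y` and the same pairs. A copy of `x` may be matched to any edge `(x, y)`; an
edge `(x, y)` to itself or to either copy of `y`; a non-edge only to itself. For a set of left
vertices whose copies of `X`-vertices cover `U` and whose edges end in `Y₀`, Hall's condition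
follows from `2|U| ≤ |N^(2)(U)| ≤ 2|Y₀| + #{edges from U to outside Y₀}`. As both sides have the
same size, the matching is perfect, and the pairs not matched to themselves form a 2-factor: they
are exactly the images of the two copies of their `x`-end and the preimages of the two copies of
their `y`-end.
-/

open Finset Function

lemma ncard_preimage_range_of_injective {ι γ δ : Type*} {φ : γ → δ} {g : ι → δ}
    (hφ : Injective φ) (hg : Injective g) (h : ∀ i, g i ∈ Set.range φ) :
    (φ ⁻¹' Set.range g).ncard = Nat.card ι := by
  rw [Set.ncard_preimage_of_injective_subset_range hφ (Set.range_subset_iff.2 h),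
    Set.ncard_range_of_injective hg]

lemma nbrIn_coe_finset {α β : Type*} (R : α → β → Prop) [DecidableRel R] (U : Finset α) (y : β) :
    nbrIn R (U : Set α) y = #{x ∈ U | R x y} := by
  rw [nbrIn, ← Set.ncard_coe_finset, coe_filter]
  rfl

section Counting

variable {α β : Type*} [Fintype α] [Fintype β] (R : α → β → Prop)

lemma N2_le_two_mul_card_add_card [DecidableEq α] [DecidableEq β] [DecidableRel R]
    (U : Finset α) (Y : Finset β) :
    N2 R U ≤ 2 * #Y + #{p : α × β | p.1 ∈ U ∧ R p.1 p.2 ∧ p.2 ∉ Y} := by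
  calc N2 R U ≤ ∑ y, ((if y ∈ Y then 2 else 0) + if y ∈ Y then 0 else #{x ∈ U | R x y}) := by
        refine sum_le_sum fun y _ => ?_
        rw [nbrIn_coe_finset]
        split_ifs <;> omega
    _ = _ := by
        rw [sum_add_distrib, sum_ite_mem, univ_inter, sum_const, smul_eq_mul, mul_comm,
          card_filter, Fintype.sum_prod_type_right]
        congr 1
        refine sum_congr rfl fun y _ => ?_
        split_ifs with hy
        · simp [hy]
        · rw [← card_filter]
          congr 1
          ext x
          simp [hy]

lemma two_mul_ncard_le_N2_of_hasBipTwoFactor (h : HasBipTwoFactor R) (U : Set α) :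
    2 * U.ncard ≤ N2 R U := by
  classical
  obtain ⟨H, hHR, hdegX, hdegY⟩ := h
  calc 2 * U.ncard = ∑ x ∈ U.toFinset, #{y | H x y} := by
        simp only [← Set.toFinset_ofPred, ← Set.ncard_eq_toFinset_card', hdegX, sum_const,
          smul_eq_mul, mul_comm]
    _ = ∑ y, #{x ∈ U.toFinset | H x y} :=
        sum_card_bipartiteAbove_eq_sum_card_bipartiteBelow _
    _ ≤ N2 R U := sum_le_sum fun y _ => le_min ?_ ?_
  · rw [← hdegY y, ← Set.ncard_coe_finset]
    exact Set.ncard_le_ncard (by simp [Set.subset_def])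
  · rw [nbrIn, ← Set.ncard_coe_finset]
    exact Set.ncard_le_ncard (by intro x; simpa using fun hx h => ⟨hx, hHR x y h⟩)

end Counting

section Gadget

variable {α β : Type*} [Fintype β] (R : α → β → Prop)

open Classical in
noncomputable def gadget : (α × Fin 2) ⊕ (α × β) → Finset ((β × Fin 2) ⊕ (α × β))
  | .inl (x, _) => (univ.filter (R x)).image fun y => .inr (x, y)
  | .inr p => insert (.inr p) (if R p.1 p.2 then univ.image fun j => .inl (p.2, j) else ∅)

variable {R}

lemma mem_gadget_inl {x : α} {i : Fin 2} {r : (β × Fin 2) ⊕ (α × β)} :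
    r ∈ gadget R (.inl (x, i)) ↔ ∃ y, R x y ∧ .inr (x, y) = r := by
  simp [gadget]

lemma mem_gadget_inr {p : α × β} {r : (β × Fin 2) ⊕ (α × β)} :
    r ∈ gadget R (.inr p) ↔ r = .inr p ∨ R p.1 p.2 ∧ ∃ j, .inl (p.2, j) = r := by
  by_cases h : R p.1 p.2 <;> simp [gadget, h]

end Gadget

section PerfectMatching

variable {α β : Type*} [Fintype β] {R : α → β → Prop}
  {e : (α × Fin 2) ⊕ (α × β) ≃ (β × Fin 2) ⊕ (α × β)} (he : ∀ v, e v ∈ gadget R v)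
include he

lemma apply_inr_ne_self_iff_exists_inl (x : α) (y : β) :
    e (.inr (x, y)) ≠ .inr (x, y) ↔ ∃ i, e (.inl (x, i)) = .inr (x, y) := by
  constructor
  · intro hne
    obtain ⟨v, hv⟩ := e.surjective (.inr (x, y))
    have hmem := he v
    rw [hv] at hmem
    rcases v with ⟨x', i⟩ | p
    · obtain ⟨y', -, hxy⟩ := mem_gadget_inl.1 hmem
      obtain rfl : x' = x := congrArg Prod.fst (Sum.inr_injective hxy)
      exact ⟨i, hv⟩
    · rcases mem_gadget_inr.1 hmem with hp | ⟨-, j, hj⟩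
      · obtain rfl := Sum.inr_injective hp
        exact absurd hv hne
      · exact absurd hj Sum.inl_ne_inr
  · rintro ⟨i, hi⟩ hself
    exact Sum.inl_ne_inr (e.injective (hi.trans hself.symm))

lemma rel_of_apply_inr_ne_self {x : α} {y : β} (h : e (.inr (x, y)) ≠ .inr (x, y)) : R x y := by
  rcases mem_gadget_inr.1 (he (.inr (x, y))) with hself | ⟨hR, -⟩
  exacts [absurd hself h, hR]

lemma apply_inr_ne_self_iff_exists_symm_inl (x : α) (y : β) :
    e (.inr (x, y)) ≠ .inr (x, y) ↔ ∃ j, e.symm (.inl (y, j)) = .inr (x, y) := by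
  simp only [Equiv.symm_apply_eq]
  rcases mem_gadget_inr.1 (he (.inr (x, y))) with hself | ⟨-, j, hj⟩
  · simp [hself]
  · simp [← hj]

lemma exists_inr_eq_apply_inl (x : α) (i : Fin 2) : ∃ y, .inr (x, y) = e (.inl (x, i)) := by
  obtain ⟨y, -, hy⟩ := mem_gadget_inl.1 (he (.inl (x, i)))
  exact ⟨y, hy⟩

lemma exists_inr_eq_symm_inl (y : β) (j : Fin 2) : ∃ x, .inr (x, y) = e.symm (.inl (y, j)) := by
  have hmem := he (e.symm (.inl (y, j)))
  rw [e.apply_symm_apply] at hmem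
  rcases hv : e.symm (.inl (y, j)) with ⟨x, i⟩ | p <;> rw [hv] at hmem
  · obtain ⟨y', -, h⟩ := mem_gadget_inl.1 hmem
    exact absurd h.symm Sum.inl_ne_inr
  · rcases mem_gadget_inr.1 hmem with h | ⟨-, j', h⟩
    · exact absurd h Sum.inl_ne_inr
    · obtain rfl : p.2 = y := congrArg Prod.fst (Sum.inl_injective h)
      exact ⟨p.1, rfl⟩

theorem hasBipTwoFactor_of_gadget_equiv : HasBipTwoFactor R := by
  refine ⟨fun x y => e (.inr (x, y)) ≠ .inr (x, y),
    fun _ _ => rel_of_apply_inr_ne_self he, fun x => ?_, fun y => ?_⟩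
  · have hset : {y | e (.inr (x, y)) ≠ .inr (x, y)}
        = (fun y => .inr (x, y)) ⁻¹' Set.range fun i => e (.inl (x, i)) := by
      ext y
      simp [apply_inr_ne_self_iff_exists_inl he]
    rw [hset, ncard_preimage_range_of_injective (fun _ _ h => by simpa using h)
      (fun _ _ h => by simpa using h) (exists_inr_eq_apply_inl he x), Nat.card_fin]
  · have hset : {x | e (.inr (x, y)) ≠ .inr (x, y)}
        = (fun x => .inr (x, y)) ⁻¹' Set.range fun j => e.symm (.inl (y, j)) := by
      ext x
      simp [apply_inr_ne_self_iff_exists_symm_inl he]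
    rw [hset, ncard_preimage_range_of_injective (fun _ _ h => by simpa using h)
      (fun _ _ h => by simpa using h) (exists_inr_eq_symm_inl he y), Nat.card_fin]

end PerfectMatching

section Hall

variable {α β : Type*} [Fintype α] [Fintype β] [DecidableEq α] [DecidableEq β]
  {R : α → β → Prop}

theorem card_le_card_biUnion_gadget (hore : ∀ U : Set α, 2 * U.ncard ≤ N2 R U)
    (S : Finset ((α × Fin 2) ⊕ (α × β))) : #S ≤ #(S.biUnion (gadget R)) := by
  classical
  set U := S.toLeft.image Prod.fst
  set Y := {p ∈ S.toRight | R p.1 p.2}.image Prod.snd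
  set E : Finset (α × β) := {p | p.1 ∈ U ∧ R p.1 p.2}
  set F : Finset (α × β) := {p | p.1 ∈ U ∧ R p.1 p.2 ∧ p.2 ∉ Y}
  have hA : #S.toLeft ≤ 2 * #U := by
    calc #S.toLeft ≤ #(U ×ˢ (univ : Finset (Fin 2))) :=
          card_le_card fun p hp => mem_product.2 ⟨mem_image_of_mem _ hp, mem_univ _⟩
      _ = 2 * #U := by simp [mul_comm]
  have hU : 2 * #U ≤ 2 * #Y + #F := by
    simpa using (hore U).trans (N2_le_two_mul_card_add_card R U Y)
  have hF : #S.toRight + #F ≤ #(S.toRight ∪ E) := by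
    rw [← card_union_of_disjoint]
    · refine card_le_card (union_subset_union subset_rfl ?_)
      intro p
      simp +contextual [E, F]
    · refine disjoint_left.2 fun p hp hpF => ?_
      simp only [F, mem_filter, mem_univ, true_and] at hpF
      exact hpF.2.2 (mem_image_of_mem _ (mem_filter.2 ⟨hp, hpF.2.1⟩))
  have hleft : Y ×ˢ univ ⊆ (S.biUnion (gadget R)).toLeft := by
    rintro ⟨y, j⟩ hyj
    obtain ⟨p, hp, rfl⟩ := mem_image.1 (mem_product.1 hyj).1
    rw [mem_filter, mem_toRight] at hp
    exact mem_toLeft.2 (mem_biUnion.2 ⟨.inr p, hp.1, mem_gadget_inr.2 (.inr ⟨hp.2, j, rfl⟩)⟩)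
  have hright : S.toRight ∪ E ⊆ (S.biUnion (gadget R)).toRight := by
    rintro ⟨x, y⟩ hxy
    rw [mem_toRight, mem_biUnion]
    rcases mem_union.1 hxy with hxy | hxy
    · exact ⟨.inr (x, y), mem_toRight.1 hxy, mem_gadget_inr.2 (.inl rfl)⟩
    · simp only [E, mem_filter, mem_univ, true_and] at hxy
      obtain ⟨⟨x, i⟩, hxi, rfl⟩ := mem_image.1 hxy.1
      exact ⟨.inl (x, i), mem_toLeft.1 hxi, mem_gadget_inl.2 ⟨y, hxy.2, rfl⟩⟩
  calc #S = #S.toLeft + #S.toRight := card_toLeft_add_card_toRight.symm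
    _ ≤ #(Y ×ˢ (univ : Finset (Fin 2))) + #(S.toRight ∪ E) := by
      rw [card_product, card_univ, Fintype.card_fin]
      omega
    _ ≤ _ := add_le_add (card_le_card hleft) (card_le_card hright)
    _ = _ := card_toLeft_add_card_toRight

end Hall

/-- Ore's theorem: a bipartite graph with equipartition `X ∪ Y` has a 2-factor iff
`|N^(2)(U)| ≥ 2|U|` for every `U ⊆ X`. -/
theorem bip_two_factor_iff_ore {α β : Type*} [Fintype α] [Fintype β]
    (R : α → β → Prop) (hcard : Fintype.card α = Fintype.card β) :
    HasBipTwoFactor R ↔ ∀ U : Set α, 2 * U.ncard ≤ N2 R U := by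
  classical
  refine ⟨two_mul_ncard_le_N2_of_hasBipTwoFactor R, fun hore => ?_⟩
  obtain ⟨f, hf_inj, hf_mem⟩ := (all_card_le_biUnion_card_iff_exists_injective (gadget R)).1
    (card_le_card_biUnion_gadget hore)
  have hf_bij : Bijective f :=
    (Fintype.bijective_iff_injective_and_card f).2 ⟨hf_inj, by simp [hcard]⟩
  exact hasBipTwoFactor_of_gadget_equiv (e := Equiv.ofBijective f hf_bij) hf_mem
end
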